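/- If the injective map g from the pre-colored graph G' into the construction graph G preserves and reflects adjacency (i.e., g embeds G' as an induced subgraph), then g(c') = c, where c is the unique vertex of G adjacent to all of A ∪ B, provided that c is the vertex of strictly maximal degree in G. -/

import Mathlib

namespace SimpleGraph

variable {V W : Type*} {G : SimpleGraph V} {G' : SimpleGraph W}

theorem Copy.apply_eq_of_degree_eq_of_forall_degree_lt (f : Copy G' G) [G.LocallyFinite]
    {c : V} (hc : ∀ v, v ≠ c → G.degree v < G.degree c)
    {c' : W} [Fintype (G'.neighborSet c')] (hdeg : G'.degree c' = G.degree c) :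
    f c' = c := by
  by_contra hne
  have hle := f.degree_le c'
  have hlt := hc (f c') hne
  omega

end SimpleGraph

/-- Abstract form of Lemma 1: if `g` embeds `G'` into `G` as an induced
subgraph, `c` is a vertex of strictly maximal degree in `G`, and the
distinguished vertex `c'` of `G'` has the same degree as `c`, then
`g(c') = c`. -/
theorem embedding_maps_max_degree_vertex
    {V W : Type} [Fintype V] [Fintype W]
    (G : SimpleGraph V) (G' : SimpleGraph W)
    [DecidableRel G.Adj] [DecidableRel G'.Adj]
    (c : V) (hc : ∀ v, v ≠ c → G.degree v < G.degree c)
    (c' : W) (hdeg : G'.degree c' = G.degree c)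
    (g : W → V) (hinj : Function.Injective g)
    (hadj : ∀ u v, G'.Adj u v ↔ G.Adj (g u) (g v)) :
    g c' = c :=
  SimpleGraph.Copy.apply_eq_of_degree_eq_of_forall_degree_lt
    ⟨⟨g, (hadj _ _).mp⟩, hinj⟩ hc hdeg
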